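/- Let m = (0, σ) ∈ B_n with σ ∈ S_n, and let ℓ = (v, π) ∈ B_n commute with m. The group generated by π permutes the orbits of σ on Fin n; for each orbit O of this action on the set of σ-orbits, all σ-orbits in O have the same cardinality e_O, and we set d_O = #{C ∈ O : v takes the value 1 on C} (v is constant on each σ-orbit). Then φ(m, ℓ) = ε̂^N with N = Σ_O (e_O − 1)·d_O, the sum being over all orbits O of ⟨π⟩ on the set of σ-orbits. -/

import Mathlib

open Finset Equiv
open scoped commutatorElement

/-- `Qf n a b = ∑_{i < j} a i * b j`. -/
def Qf (n : ℕ) (a b : Fin n → ZMod 2) : ZMod 2 :=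
  ∑ p ∈ Finset.univ.filter (fun p : Fin n × Fin n => p.1 < p.2), a p.1 * b p.2

/-- The underlying set of the group `H n`: pairs `(a, b)` with
`a : Fin n → ZMod 2` and `b : ZMod 2`. -/
@[ext] structure H (n : ℕ) where
  a : Fin n → ZMod 2
  b : ZMod 2

namespace H

variable {n : ℕ}

instance : Mul (H n) := ⟨fun x y => ⟨x.a + y.a, x.b + y.b + Qf n x.a y.a⟩⟩
instance : One (H n) := ⟨⟨0, 0⟩⟩
instance : Inv (H n) := ⟨fun x => ⟨x.a, x.b + Qf n x.a x.a⟩⟩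

@[simp] lemma mul_a (x y : H n) : (x * y).a = x.a + y.a := rfl
@[simp] lemma mul_b (x y : H n) : (x * y).b = x.b + y.b + Qf n x.a y.a := rfl
@[simp] lemma one_a : (1 : H n).a = 0 := rfl
@[simp] lemma one_b : (1 : H n).b = 0 := rfl
@[simp] lemma inv_a (x : H n) : (x⁻¹).a = x.a := rfl
@[simp] lemma inv_b (x : H n) : (x⁻¹).b = x.b + Qf n x.a x.a := rfl

lemma Qf_add_left (a a' b : Fin n → ZMod 2) :
    Qf n (a + a') b = Qf n a b + Qf n a' b := by
  simp [Qf, add_mul, Finset.sum_add_distrib]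

lemma Qf_add_right (a b b' : Fin n → ZMod 2) :
    Qf n a (b + b') = Qf n a b + Qf n a b' := by
  simp [Qf, mul_add, Finset.sum_add_distrib]

@[simp] lemma Qf_zero_left (b : Fin n → ZMod 2) : Qf n 0 b = 0 := by simp [Qf]
@[simp] lemma Qf_zero_right (a : Fin n → ZMod 2) : Qf n a 0 = 0 := by simp [Qf]

instance : Group (H n) where
  mul_assoc x y z := by
    ext i
    · simp [add_assoc]
    · simp only [mul_b, mul_a, Qf_add_left, Qf_add_right]
      ring
  one_mul x := by ext i <;> simp
  mul_one x := by ext i <;> simp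
  inv_mul_cancel x := by
    ext i
    · show x.a i + x.a i = 0
      generalize x.a i = u; revert u; decide
    · show x.b + Qf n x.a x.a + x.b + Qf n x.a x.a = 0
      generalize x.b = u; generalize Qf n x.a x.a = q
      revert u q; decide

end H

/-- The generator `x_i = (e_i, 0)` of `H n`. -/
def xgen (n : ℕ) (i : Fin n) : H n := ⟨Pi.single i 1, 0⟩

/-- The central element `ε = (0, 1)` of `H n`. -/
def eps (n : ℕ) : H n := ⟨0, 1⟩

/-- `Rf n σ a = ∑_{i < j, σ i > σ j} a i * a j`. -/
def Rf (n : ℕ) (σ : Equiv.Perm (Fin n)) (a : Fin n → ZMod 2) : ZMod 2 :=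
  ∑ p ∈ Finset.univ.filter
      (fun p : Fin n × Fin n => p.1 < p.2 ∧ σ p.2 < σ p.1), a p.1 * a p.2

/-- The action of `σ ∈ Sₙ` on `H n`:
`σ · (a, b) = (a ∘ σ⁻¹, b + ∑_{i<j, σ i > σ j} a i * a j)`. -/
def actH (n : ℕ) (σ : Equiv.Perm (Fin n)) (g : H n) : H n :=
  ⟨g.a ∘ σ.symm, g.b + Rf n σ g.a⟩

section Lemmas

open Finset Equiv

variable {n : ℕ}

private lemma two_cancel : ∀ x : ZMod 2, x + x = 0 := by decide

/-- Reindexing a pair-sum by a permutation acting diagonally. -/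
private lemma sum_pair_perm (τ : Equiv.Perm (Fin n)) (c : Fin n × Fin n → Prop)
    [DecidablePred c] (f : Fin n → Fin n → ZMod 2) :
    ∑ p ∈ Finset.univ.filter (fun p : Fin n × Fin n => c (τ p.1, τ p.2)), f (τ p.1) (τ p.2)
      = ∑ p ∈ Finset.univ.filter c, f p.1 p.2 := by
  apply Finset.sum_equiv (Equiv.prodCongr τ τ) <;> simp

/-- Reindexing a pair-sum by the swap. -/
private lemma sum_pair_swap (c : Fin n × Fin n → Prop)
    [DecidablePred c] (f : Fin n → Fin n → ZMod 2) :
    ∑ p ∈ Finset.univ.filter c, f p.1 p.2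
      = ∑ p ∈ Finset.univ.filter (fun p : Fin n × Fin n => c (p.2, p.1)), f p.2 p.1 := by
  apply Finset.sum_equiv (Equiv.prodComm (Fin n) (Fin n)) <;> simp

end Lemmas

section Lemmas2

open Finset Equiv

variable {n : ℕ}

private lemma flip_lt {x y : Fin n} (hne : x ≠ y) : ¬ x < y ↔ y < x :=
  ⟨fun h => lt_of_le_of_ne (not_lt.mp h) hne.symm, fun h h' => absurd h' (asymm h)⟩

private lemma Rf_add (σ : Equiv.Perm (Fin n)) (a b : Fin n → ZMod 2) :
    Rf n σ (a + b) = Rf n σ a + Rf n σ b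
      + ∑ p ∈ Finset.univ.filter (fun p : Fin n × Fin n => p.1 < p.2 ∧ σ p.2 < σ p.1),
          (a p.1 * b p.2 + b p.1 * a p.2) := by
  simp only [Rf, ← Finset.sum_add_distrib]
  apply Finset.sum_congr rfl
  intro p _
  simp only [Pi.add_apply]
  ring

private lemma Qf_act (σ : Equiv.Perm (Fin n)) (a b : Fin n → ZMod 2) :
    Qf n (a ∘ σ.symm) (b ∘ σ.symm)
      = Qf n a b
        + ∑ p ∈ Finset.univ.filter (fun p : Fin n × Fin n => p.1 < p.2 ∧ σ p.2 < σ p.1),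
            (a p.1 * b p.2 + b p.1 * a p.2) := by
  classical
  have h1 : Qf n (a ∘ σ.symm) (b ∘ σ.symm)
      = ∑ p ∈ Finset.univ.filter (fun p : Fin n × Fin n => σ p.1 < σ p.2),
          a p.1 * b p.2 := by
    rw [Qf]
    apply Finset.sum_equiv (Equiv.prodCongr σ.symm σ.symm) <;> simp
  have h2 : ∑ p ∈ Finset.univ.filter (fun p : Fin n × Fin n => σ p.1 < σ p.2), a p.1 * b p.2
      = ∑ p ∈ Finset.univ.filter
            (fun p : Fin n × Fin n => σ p.1 < σ p.2 ∧ p.1 < p.2), a p.1 * b p.2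
        + ∑ p ∈ Finset.univ.filter
            (fun p : Fin n × Fin n => σ p.1 < σ p.2 ∧ p.2 < p.1), a p.1 * b p.2 := by
    rw [← Finset.sum_filter_add_sum_filter_not
      (Finset.univ.filter (fun p : Fin n × Fin n => σ p.1 < σ p.2))
      (fun p : Fin n × Fin n => p.1 < p.2)]
    congr 1
    · rw [Finset.filter_filter]
    · rw [Finset.filter_filter]
      refine Finset.sum_congr (Finset.filter_congr ?_) (fun _ _ => rfl)
      intro p _
      constructor
      · rintro ⟨h1', h2'⟩
        have hne : p.1 ≠ p.2 := fun h => absurd (h ▸ h1' : σ p.1 < σ p.1) (lt_irrefl _)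
        exact ⟨h1', (flip_lt hne).mp h2'⟩
      · rintro ⟨h1', h2'⟩
        exact ⟨h1', fun h => absurd h (asymm h2')⟩
  have h3 : ∑ p ∈ Finset.univ.filter
        (fun p : Fin n × Fin n => σ p.1 < σ p.2 ∧ p.2 < p.1), a p.1 * b p.2
      = ∑ p ∈ Finset.univ.filter
            (fun p : Fin n × Fin n => p.1 < p.2 ∧ σ p.2 < σ p.1), b p.1 * a p.2 := by
    rw [sum_pair_swap (fun p : Fin n × Fin n => σ p.1 < σ p.2 ∧ p.2 < p.1)
      (fun i j => a i * b j)]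
    refine Finset.sum_congr (Finset.filter_congr ?_) ?_
    · intro p _
      exact ⟨fun h => ⟨h.2, h.1⟩, fun h => ⟨h.2, h.1⟩⟩
    · intro p _; ring
  have h4 : Qf n a b
      = ∑ p ∈ Finset.univ.filter
            (fun p : Fin n × Fin n => σ p.1 < σ p.2 ∧ p.1 < p.2), a p.1 * b p.2
        + ∑ p ∈ Finset.univ.filter
            (fun p : Fin n × Fin n => p.1 < p.2 ∧ σ p.2 < σ p.1), a p.1 * b p.2 := by
    rw [Qf, ← Finset.sum_filter_add_sum_filter_not
      (Finset.univ.filter (fun p : Fin n × Fin n => p.1 < p.2))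
      (fun p : Fin n × Fin n => σ p.1 < σ p.2)]
    congr 1
    · rw [Finset.filter_filter]
      refine Finset.sum_congr (Finset.filter_congr ?_) (fun _ _ => rfl)
      intro p _
      exact ⟨fun h => ⟨h.2, h.1⟩, fun h => ⟨h.2, h.1⟩⟩
    · rw [Finset.filter_filter]
      refine Finset.sum_congr (Finset.filter_congr ?_) (fun _ _ => rfl)
      intro p _
      constructor
      · rintro ⟨h1', h2'⟩
        have hne : σ p.1 ≠ σ p.2 := fun h =>
          absurd h1' (by rw [σ.injective h]; exact lt_irrefl _)
        exact ⟨h1', (flip_lt hne).mp h2'⟩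
      · rintro ⟨h1', h2'⟩
        exact ⟨h1', fun h => absurd h (asymm h2')⟩
  have h5 : ∑ p ∈ Finset.univ.filter
        (fun p : Fin n × Fin n => p.1 < p.2 ∧ σ p.2 < σ p.1),
          (a p.1 * b p.2 + b p.1 * a p.2)
      = ∑ p ∈ Finset.univ.filter
            (fun p : Fin n × Fin n => p.1 < p.2 ∧ σ p.2 < σ p.1), a p.1 * b p.2
        + ∑ p ∈ Finset.univ.filter
            (fun p : Fin n × Fin n => p.1 < p.2 ∧ σ p.2 < σ p.1), b p.1 * a p.2 :=
    Finset.sum_add_distrib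
  rw [h1, h2, h3, h4, h5]
  have h6 := two_cancel (∑ p ∈ Finset.univ.filter
      (fun p : Fin n × Fin n => p.1 < p.2 ∧ σ p.2 < σ p.1), a p.1 * b p.2)
  linear_combination -h6

end Lemmas2

section Lemmas3

open Finset Equiv

variable {n : ℕ}

private lemma Rf_comp (σ τ : Equiv.Perm (Fin n)) (a : Fin n → ZMod 2) :
    Rf n (σ * τ) a = Rf n τ a + Rf n σ (a ∘ τ.symm) := by
  classical
  -- rewrite `Rf (σ * τ)`
  have hA : Rf n (σ * τ) a
      = ∑ p ∈ Finset.univ.filter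
          (fun p : Fin n × Fin n => p.1 < p.2 ∧ σ (τ p.2) < σ (τ p.1)), a p.1 * a p.2 := by
    rw [Rf]
    refine Finset.sum_congr (Finset.filter_congr ?_) (fun _ _ => rfl)
    intro p _
    simp [Equiv.Perm.mul_apply]
  -- split it according to the relative order of `τ p.1`, `τ p.2`
  have hB : ∑ p ∈ Finset.univ.filter
        (fun p : Fin n × Fin n => p.1 < p.2 ∧ σ (τ p.2) < σ (τ p.1)), a p.1 * a p.2
      = ∑ p ∈ Finset.univ.filter
            (fun p : Fin n × Fin n =>
              (p.1 < p.2 ∧ σ (τ p.2) < σ (τ p.1)) ∧ τ p.1 < τ p.2), a p.1 * a p.2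
        + ∑ p ∈ Finset.univ.filter
            (fun p : Fin n × Fin n =>
              (p.1 < p.2 ∧ σ (τ p.2) < σ (τ p.1)) ∧ τ p.2 < τ p.1), a p.1 * a p.2 := by
    rw [← Finset.sum_filter_add_sum_filter_not
      (Finset.univ.filter
        (fun p : Fin n × Fin n => p.1 < p.2 ∧ σ (τ p.2) < σ (τ p.1)))
      (fun p : Fin n × Fin n => τ p.1 < τ p.2)]
    congr 1
    · rw [Finset.filter_filter]
    · rw [Finset.filter_filter]
      refine Finset.sum_congr (Finset.filter_congr ?_) (fun _ _ => rfl)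
      intro p _
      constructor
      · rintro ⟨h1, h2⟩
        have hne : τ p.1 ≠ τ p.2 := fun h => absurd h1.1 (by
          have := τ.injective h; rw [this]; exact lt_irrefl _)
        exact ⟨h1, (flip_lt hne).mp h2⟩
      · rintro ⟨h1, h2⟩
        exact ⟨h1, fun h => absurd h (asymm h2)⟩
  -- split `Rf τ a` according to the relative order of `στ p.1`, `στ p.2`
  have hC : Rf n τ a
      = ∑ p ∈ Finset.univ.filter
            (fun p : Fin n × Fin n =>
              (p.1 < p.2 ∧ τ p.2 < τ p.1) ∧ σ (τ p.1) < σ (τ p.2)), a p.1 * a p.2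
        + ∑ p ∈ Finset.univ.filter
            (fun p : Fin n × Fin n =>
              (p.1 < p.2 ∧ σ (τ p.2) < σ (τ p.1)) ∧ τ p.2 < τ p.1), a p.1 * a p.2 := by
    rw [Rf, ← Finset.sum_filter_add_sum_filter_not
      (Finset.univ.filter
        (fun p : Fin n × Fin n => p.1 < p.2 ∧ τ p.2 < τ p.1))
      (fun p : Fin n × Fin n => σ (τ p.1) < σ (τ p.2))]
    congr 1
    · rw [Finset.filter_filter]
    · rw [Finset.filter_filter]
      refine Finset.sum_congr (Finset.filter_congr ?_) (fun _ _ => rfl)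
      intro p _
      constructor
      · rintro ⟨h1, h2⟩
        have hne : σ (τ p.1) ≠ σ (τ p.2) := fun h => absurd h1.2 (by
          have := σ.injective h; rw [this]; exact lt_irrefl _)
        exact ⟨⟨h1.1, (flip_lt hne).mp h2⟩, h1.2⟩
      · rintro ⟨h1, h2⟩
        exact ⟨⟨h1.1, h2⟩, fun h => absurd h (asymm h1.2)⟩
  -- reindex `Rf σ (a ∘ τ.symm)` and split according to the order of `p.1`, `p.2`
  have hD : Rf n σ (a ∘ τ.symm)
      = ∑ p ∈ Finset.univ.filter
          (fun p : Fin n × Fin n => τ p.1 < τ p.2 ∧ σ (τ p.2) < σ (τ p.1)),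
            a p.1 * a p.2 := by
    rw [Rf]
    apply Finset.sum_equiv (Equiv.prodCongr τ.symm τ.symm) <;> simp
  have hE : ∑ p ∈ Finset.univ.filter
        (fun p : Fin n × Fin n => τ p.1 < τ p.2 ∧ σ (τ p.2) < σ (τ p.1)), a p.1 * a p.2
      = ∑ p ∈ Finset.univ.filter
            (fun p : Fin n × Fin n =>
              (p.1 < p.2 ∧ σ (τ p.2) < σ (τ p.1)) ∧ τ p.1 < τ p.2), a p.1 * a p.2
        + ∑ p ∈ Finset.univ.filter
            (fun p : Fin n × Fin n =>
              (τ p.1 < τ p.2 ∧ σ (τ p.2) < σ (τ p.1)) ∧ p.2 < p.1), a p.1 * a p.2 := by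
    rw [← Finset.sum_filter_add_sum_filter_not
      (Finset.univ.filter
        (fun p : Fin n × Fin n => τ p.1 < τ p.2 ∧ σ (τ p.2) < σ (τ p.1)))
      (fun p : Fin n × Fin n => p.1 < p.2)]
    congr 1
    · rw [Finset.filter_filter]
      refine Finset.sum_congr (Finset.filter_congr ?_) (fun _ _ => rfl)
      intro p _
      exact ⟨fun h => ⟨⟨h.2, h.1.2⟩, h.1.1⟩, fun h => ⟨⟨h.2, h.1.2⟩, h.1.1⟩⟩
    · rw [Finset.filter_filter]
      refine Finset.sum_congr (Finset.filter_congr ?_) (fun _ _ => rfl)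
      intro p _
      constructor
      · rintro ⟨h1, h2⟩
        have hne : p.1 ≠ p.2 := fun h => absurd h1.1 (by rw [h]; exact lt_irrefl _)
        exact ⟨h1, (flip_lt hne).mp h2⟩
      · rintro ⟨h1, h2⟩
        exact ⟨h1, fun h => absurd h (asymm h2)⟩
  -- swap the second piece of `hE`
  have hF : ∑ p ∈ Finset.univ.filter
        (fun p : Fin n × Fin n =>
          (τ p.1 < τ p.2 ∧ σ (τ p.2) < σ (τ p.1)) ∧ p.2 < p.1), a p.1 * a p.2
      = ∑ p ∈ Finset.univ.filter
            (fun p : Fin n × Fin n =>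
              (p.1 < p.2 ∧ τ p.2 < τ p.1) ∧ σ (τ p.1) < σ (τ p.2)), a p.1 * a p.2 := by
    rw [sum_pair_swap
      (fun p : Fin n × Fin n => (τ p.1 < τ p.2 ∧ σ (τ p.2) < σ (τ p.1)) ∧ p.2 < p.1)
      (fun i j => a i * a j)]
    refine Finset.sum_congr (Finset.filter_congr ?_) ?_
    · intro p _
      exact ⟨fun h => ⟨⟨h.2, h.1.1⟩, h.1.2⟩, fun h => ⟨⟨h.1.2, h.2⟩, h.1.1⟩⟩
    · intro p _; ring
  rw [hA, hB, hC, hD, hE, hF]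
  have h6 := two_cancel (∑ p ∈ Finset.univ.filter
      (fun p : Fin n × Fin n =>
        (p.1 < p.2 ∧ τ p.2 < τ p.1) ∧ σ (τ p.1) < σ (τ p.2)), a p.1 * a p.2)
  linear_combination -h6

end Lemmas3

/-- The group `G n = H n ⋊ Sₙ` (the semidirect product for the action `actH`). -/
@[ext] structure G (n : ℕ) where
  h : H n
  s : Equiv.Perm (Fin n)

section ActLemmas

open Finset Equiv

variable {n : ℕ}

private lemma actH_mul (σ : Equiv.Perm (Fin n)) (g h : H n) :
    actH n σ (g * h) = actH n σ g * actH n σ h := by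
  refine H.ext ?_ ?_
  · funext i; rfl
  · show (g.b + h.b + Qf n g.a h.a) + Rf n σ (g.a + h.a)
       = (g.b + Rf n σ g.a) + (h.b + Rf n σ h.a) + Qf n (g.a ∘ σ.symm) (h.a ∘ σ.symm)
    rw [Rf_add, Qf_act]
    ring

private lemma actH_one_perm (g : H n) : actH n (1 : Equiv.Perm (Fin n)) g = g := by
  refine H.ext ?_ ?_
  · funext i; rfl
  · show g.b + Rf n 1 g.a = g.b
    have h0 : Rf n (1 : Equiv.Perm (Fin n)) g.a = 0 := by
      rw [Rf, Finset.filter_false_of_mem, Finset.sum_empty]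
      rintro p _ ⟨h1, h2⟩
      exact absurd h2 (asymm h1)
    rw [h0, add_zero]

private lemma actH_H_one (σ : Equiv.Perm (Fin n)) : actH n σ (1 : H n) = 1 := by
  refine H.ext ?_ ?_
  · funext i; rfl
  · show (0 : ZMod 2) + Rf n σ (0 : Fin n → ZMod 2) = 0
    simp [Rf]

private lemma actH_comp (σ τ : Equiv.Perm (Fin n)) (g : H n) :
    actH n (σ * τ) g = actH n σ (actH n τ g) := by
  refine H.ext ?_ ?_
  · funext i; rfl
  · show g.b + Rf n (σ * τ) g.a = (g.b + Rf n τ g.a) + Rf n σ (g.a ∘ τ.symm)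
    rw [Rf_comp]
    ring

end ActLemmas

namespace G

variable {n : ℕ}

instance : Mul (G n) := ⟨fun x y => ⟨x.h * actH n x.s y.h, x.s * y.s⟩⟩
instance : One (G n) := ⟨⟨1, 1⟩⟩
instance : Inv (G n) := ⟨fun x => ⟨actH n x.s⁻¹ x.h⁻¹, x.s⁻¹⟩⟩

@[simp] lemma mul_h (x y : G n) : (x * y).h = x.h * actH n x.s y.h := rfl
@[simp] lemma mul_s (x y : G n) : (x * y).s = x.s * y.s := rfl
@[simp] lemma one_h : (1 : G n).h = 1 := rfl
@[simp] lemma one_s : (1 : G n).s = 1 := rfl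

instance : Group (G n) where
  mul_assoc x y z := by
    refine G.ext ?_ ?_
    · show (x.h * actH n x.s y.h) * actH n (x.s * y.s) z.h
         = x.h * actH n x.s (y.h * actH n y.s z.h)
      rw [actH_mul, ← actH_comp]
      exact mul_assoc _ _ _
    · exact mul_assoc x.s y.s z.s
  one_mul x := by
    refine G.ext ?_ ?_
    · show (1 : H n) * actH n 1 x.h = x.h
      rw [actH_one_perm, one_mul]
    · exact one_mul x.s
  mul_one x := by
    refine G.ext ?_ ?_
    · show x.h * actH n x.s 1 = x.h
      rw [actH_H_one, mul_one]
    · exact mul_one x.s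
  inv_mul_cancel x := by
    refine G.ext ?_ ?_
    · show actH n x.s⁻¹ x.h⁻¹ * actH n x.s⁻¹ x.h = 1
      rw [← actH_mul, inv_mul_cancel, actH_H_one]
    · exact inv_mul_cancel x.s

end G

/-- The hyperoctahedral group `B n = (ZMod 2)ⁿ ⋊ Sₙ`, with
`(a₁, π₁) * (a₂, π₂) = (a₁ + a₂ ∘ π₁⁻¹, π₁ * π₂)`. -/
@[ext] structure B (n : ℕ) where
  a : Fin n → ZMod 2
  s : Equiv.Perm (Fin n)

namespace B

variable {n : ℕ}

instance : Mul (B n) := ⟨fun x y => ⟨x.a + y.a ∘ x.s.symm, x.s * y.s⟩⟩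
instance : One (B n) := ⟨⟨0, 1⟩⟩
instance : Inv (B n) := ⟨fun x => ⟨x.a ∘ x.s, x.s⁻¹⟩⟩

@[simp] lemma mul_a (x y : B n) : (x * y).a = x.a + y.a ∘ x.s.symm := rfl
@[simp] lemma mul_s (x y : B n) : (x * y).s = x.s * y.s := rfl
@[simp] lemma one_a : (1 : B n).a = 0 := rfl
@[simp] lemma one_s : (1 : B n).s = 1 := rfl

instance : Group (B n) where
  mul_assoc x y z := by
    refine B.ext ?_ ?_
    · funext i
      show x.a i + y.a (x.s.symm i) + z.a (y.s.symm (x.s.symm i))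
         = x.a i + (y.a (x.s.symm i) + z.a (y.s.symm (x.s.symm i)))
      exact add_assoc _ _ _
    · exact mul_assoc x.s y.s z.s
  one_mul x := by
    refine B.ext ?_ ?_
    · funext i
      show (0 : ZMod 2) + x.a i = x.a i
      exact zero_add _
    · exact one_mul x.s
  mul_one x := by
    refine B.ext ?_ ?_
    · funext i
      show x.a i + (0 : ZMod 2) = x.a i
      exact add_zero _
    · exact mul_one x.s
  inv_mul_cancel x := by
    refine B.ext ?_ ?_
    · funext i
      show x.a (x.s i) + x.a ((x.s⁻¹).symm i) = 0
      have h : (x.s⁻¹).symm i = x.s i := rfl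
      rw [h]
      generalize x.a (x.s i) = u; revert u; decide
    · exact inv_mul_cancel x.s

end B

/-- The projection `p : G n → B n`, `((a, b), σ) ↦ (a, σ)`. -/
def pG (n : ℕ) (g : G n) : B n := ⟨g.h.a, g.s⟩

/-- The central element `ε̂ = ((0,1), 1)` of `G n`. -/
def epsG (n : ℕ) : G n := ⟨⟨0, 1⟩, 1⟩

/-- The orbit of `k` under the cyclic group generated by `σ`, as a `Finset`. -/
noncomputable def orb (n : ℕ) (σ : Equiv.Perm (Fin n)) (k : Fin n) : Finset (Fin n) :=
  letI := Classical.decPred fun j : Fin n => ∃ m : ℤ, (σ ^ m) k = j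
  Finset.univ.filter (fun j => ∃ m : ℤ, (σ ^ m) k = j)

/-- The set of orbits of `σ` on `Fin n`. -/
noncomputable def orbs (n : ℕ) (σ : Equiv.Perm (Fin n)) : Finset (Finset (Fin n)) :=
  Finset.univ.image (orb n σ)

/-- The orbit of `k` under the group generated by the commuting permutations `σ` and `π`;
it is the union of the `σ`-orbits belonging to the orbit (under the action of the group
generated by `π` on the set of `σ`-orbits) of the `σ`-orbit of `k`. -/
noncomputable def orb2 (n : ℕ) (σ π : Equiv.Perm (Fin n)) (k : Fin n) : Finset (Fin n) :=
  letI := Classical.decPred fun j : Fin n => ∃ a b : ℤ, (σ ^ a * π ^ b) k = j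
  Finset.univ.filter (fun j => ∃ a b : ℤ, (σ ^ a * π ^ b) k = j)

/-- The set of orbits of the group generated by `σ` and `π` on `Fin n`. -/
noncomputable def orbs2 (n : ℕ) (σ π : Equiv.Perm (Fin n)) : Finset (Finset (Fin n)) :=
  Finset.univ.image (orb2 n σ π)

/-!
Lift `m = (0, σ)` and `ℓ = (v, π)` to `G n`. Since `v` is `σ`-invariant and `σπ = πσ`, the
products `m̃ ℓ̃` and `ℓ̃ m̃` differ by the central element `ε̂ ^ r`, where
`r = ∑_{i < j, σ i > σ j} v i v j` is the number of inversions of the restriction of `σ` to the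
`σ`-invariant set `S = {v = 1}`. The parity of that number is the sign of `σ|_S`, that is
`∑ (|C| - 1)` over the `σ`-orbits `C ⊆ S`. Finally `π` commutes with `σ`, so it carries
`σ`-orbits to `σ`-orbits of the same size, and grouping the orbits `C ⊆ S` by the
`⟨π⟩`-orbit they belong to gives `∑_O (e_O - 1) d_O`.
-/

namespace Equiv.Perm

section Orbits

variable {α : Type*} [Fintype α] [DecidableEq α]

theorem sign_eq_neg_one_pow_sum_card_support_sub_one (f : Perm α) :
    sign f = (-1) ^ ∑ c ∈ f.cycleFactorsFinset, (#c.support - 1) := by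
  have hsum : ∑ c ∈ f.cycleFactorsFinset, #c.support
      = ∑ c ∈ f.cycleFactorsFinset, (#c.support - 1) + #f.cycleFactorsFinset := by
    rw [card_eq_sum_ones, ← sum_add_distrib]
    refine sum_congr rfl fun c hc => ?_
    have := (mem_cycleFactorsFinset_iff.mp hc).1.two_le_card_support
    omega
  rw [sign_of_cycleType, cycleType_def, Multiset.card_map, Finset.card_val]
  change (-1) ^ (∑ c ∈ f.cycleFactorsFinset, #c.support + _) = _
  rw [hsum, add_assoc, ← two_mul, pow_add, pow_mul, Int.units_sq, one_pow, mul_one]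

theorem support_cycleOf_eq_filter_sameCycle {f : Perm α} {x : α} (hx : f x ≠ x) :
    (f.cycleOf x).support = ({y | f.SameCycle x y} : Finset α) := by
  ext y
  rw [mem_support_cycleOf_iff, mem_filter, mem_support]
  simp [hx]

theorem image_support_cycleFactorsFinset (f : Perm α) :
    f.cycleFactorsFinset.image support
      = {C ∈ univ.image fun x => ({y | f.SameCycle x y} : Finset α) | 1 < #C} := by
  ext C
  simp only [mem_image, mem_filter, mem_univ, true_and]
  constructor
  · rintro ⟨c, hc, rfl⟩
    obtain ⟨x, hx⟩ := (mem_cycleFactorsFinset_iff.mp hc).1.nonempty_support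
    refine ⟨⟨x, ?_⟩, (mem_cycleFactorsFinset_iff.mp hc).1.two_le_card_support⟩
    rw [cycle_is_cycleOf hx hc, support_cycleOf_eq_filter_sameCycle]
    exact mem_support.mp (mem_cycleFactorsFinset_support_le hc hx)
  · rintro ⟨⟨x, rfl⟩, hC⟩
    have hx : f x ≠ x := by
      intro hx
      have hCx : ({y | f.SameCycle x y} : Finset α) ⊆ {x} := fun y hy =>
        mem_singleton.mpr ((mem_filter.mp hy).2.eq_of_left hx).symm
      exact hC.not_ge ((card_le_card hCx).trans (card_singleton x).le)
    exact ⟨f.cycleOf x, cycleOf_mem_cycleFactorsFinset_iff.mpr (mem_support.mpr hx),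
      support_cycleOf_eq_filter_sameCycle hx⟩

theorem sum_card_support_sub_one_cycleFactorsFinset (f : Perm α) :
    ∑ c ∈ f.cycleFactorsFinset, (#c.support - 1)
      = ∑ C ∈ univ.image (fun x => ({y | f.SameCycle x y} : Finset α)), (#C - 1) := by
  rw [← sum_filter_of_ne (p := fun C => 1 < #C) (fun C _ h => by omega),
    ← image_support_cycleFactorsFinset, sum_image]
  intro c hc c' hc' h
  obtain ⟨x, hx⟩ := (mem_cycleFactorsFinset_iff.mp hc).1.nonempty_support
  rw [cycle_is_cycleOf hx hc, cycle_is_cycleOf (h ▸ hx : x ∈ c'.support) hc']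

theorem sign_eq_neg_one_pow_sum_card_orbit_sub_one (f : Perm α) :
    sign f
      = (-1) ^ ∑ C ∈ univ.image (fun x => ({y | f.SameCycle x y} : Finset α)), (#C - 1) := by
  rw [sign_eq_neg_one_pow_sum_card_support_sub_one, sum_card_support_sub_one_cycleFactorsFinset]

section Subtype

variable {p : α → Prop} [DecidablePred p]

theorem map_filter_sameCycle_subtypePerm (f : Perm α) (h : ∀ x, p (f x) ↔ p x)
    (x : {x // p x}) :
    ({y | (f.subtypePerm h).SameCycle x y} : Finset {x // p x}).map (Function.Embedding.subtype p)
      = ({y | f.SameCycle x y} : Finset α) := by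
  ext y
  simp only [mem_map, mem_filter, mem_univ, true_and, Function.Embedding.subtype_apply]
  constructor
  · rintro ⟨y, hy, rfl⟩
    exact sameCycle_subtypePerm.mp hy
  · rintro ⟨k, rfl⟩
    exact ⟨(f.subtypePerm h ^ k) x, ⟨k, rfl⟩, by rw [subtypePerm_zpow]; rfl⟩

theorem sum_card_orbit_sub_one_subtypePerm (f : Perm α) (h : ∀ x, p (f x) ↔ p x) :
    ∑ C ∈ univ.image (fun x => ({y | (f.subtypePerm h).SameCycle x y} : Finset {x // p x})),
        (#C - 1)
      = ∑ C ∈ (univ.filter p).image (fun x => ({y | f.SameCycle x y} : Finset α)),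
          (#C - 1) := by
  have himage : (univ.filter p).image (fun x => ({y | f.SameCycle x y} : Finset α))
      = (univ.image fun x => ({y | (f.subtypePerm h).SameCycle x y} : Finset {x // p x})).image
          (map (Function.Embedding.subtype p)) := by
    ext C
    simp only [mem_image, mem_filter, mem_univ, true_and]
    constructor
    · rintro ⟨x, hx, rfl⟩
      exact ⟨_, ⟨⟨x, hx⟩, rfl⟩, map_filter_sameCycle_subtypePerm f h ⟨x, hx⟩⟩
    · rintro ⟨_, ⟨x, rfl⟩, rfl⟩
      exact ⟨x, x.2, (map_filter_sameCycle_subtypePerm f h x).symm⟩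
  rw [himage, sum_image fun _ _ _ _ h => map_injective _ h]
  simp only [card_map]

end Subtype

end Orbits

section Inversions

variable {α : Type*} [LinearOrder α] [Fintype α]

def inversions (f : Perm α) : Finset (α × α) := {q | q.1 < q.2 ∧ f q.2 < f q.1}

theorem sign_eq_signAux {m : ℕ} (f : Perm (Fin m)) : sign f = signAux f := by
  induction f using swap_induction_on with
  | one => rw [map_one, signAux_one]
  | swap_mul f x y hxy ih => rw [map_mul, signAux_mul, ih, sign_swap hxy, signAux_swap hxy]

theorem sign_eq_neg_one_pow_card_inversions_fin {m : ℕ} (f : Perm (Fin m)) :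
    sign f = (-1) ^ #f.inversions := by
  rw [sign_eq_signAux, signAux, prod_ite, prod_const, prod_const, one_pow, mul_one]
  congr 1
  refine card_nbij' (fun x => (x.2, x.1)) (fun q => ⟨q.2, q.1⟩) ?_ ?_
    (fun _ _ => rfl) (fun _ _ => rfl)
  · rintro ⟨x₁, x₂⟩ hx
    simp only [coe_filter, mem_finPairsLT, Set.mem_ofPred_eq] at hx
    simp only [inversions, coe_filter, mem_univ, true_and, Set.mem_ofPred_eq]
    exact ⟨hx.1, hx.2.lt_of_ne fun h => hx.1.ne' (f.injective h)⟩
  · rintro ⟨q₁, q₂⟩ hq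
    simp only [inversions, coe_filter, mem_univ, true_and, Set.mem_ofPred_eq] at hq
    simp only [coe_filter, mem_finPairsLT, Set.mem_ofPred_eq]
    exact ⟨hq.1, hq.2.le⟩

theorem card_inversions_permCongr {β : Type*} [LinearOrder β] [Fintype β] (e : α ≃o β)
    (f : Perm α) : #(e.toEquiv.permCongr f).inversions = #f.inversions := by
  refine card_nbij' (fun q => (e.symm q.1, e.symm q.2)) (fun q => (e q.1, e q.2))
    ?_ ?_ (fun _ _ => by simp) (fun _ _ => by simp) <;>
  · intro q hq
    simp_all [inversions]

theorem sign_eq_neg_one_pow_card_inversions (f : Perm α) : sign f = (-1) ^ #f.inversions := by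
  let e := monoEquivOfFin α rfl
  rw [← card_inversions_permCongr e.symm, ← sign_eq_neg_one_pow_card_inversions_fin,
    sign_permCongr]

variable {p : α → Prop} [DecidablePred p]

theorem card_inversions_subtypePerm (f : Perm α) (h : ∀ x, p (f x) ↔ p x) :
    #(f.subtypePerm h).inversions = #{q ∈ f.inversions | p q.1 ∧ p q.2} := by
  refine card_nbij (fun q => (q.1.val, q.2.val)) ?_ ?_ ?_
  · rintro ⟨x, y⟩ hq
    simp_all [inversions, x.2, y.2]
  · rintro ⟨x, y⟩ _ ⟨x', y'⟩ _ hq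
    simp_all [Subtype.ext_iff]
  · rintro ⟨x, y⟩ hq
    simp only [inversions, coe_filter, Set.mem_ofPred_eq] at hq
    exact ⟨(⟨x, hq.2.1⟩, ⟨y, hq.2.2⟩), by simpa [inversions] using hq.1, rfl⟩

theorem neg_one_pow_card_inversions_filter (f : Perm α) (h : ∀ x, p (f x) ↔ p x) :
    (-1 : ℤˣ) ^ #{q ∈ f.inversions | p q.1 ∧ p q.2}
      = (-1) ^ ∑ C ∈ (univ.filter p).image (fun x => ({y | f.SameCycle x y} : Finset α)),
          (#C - 1) := by
  rw [← card_inversions_subtypePerm f h, ← sign_eq_neg_one_pow_card_inversions,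
    sign_eq_neg_one_pow_sum_card_orbit_sub_one]
  exact congrArg _ (sum_card_orbit_sub_one_subtypePerm f h)

end Inversions

end Equiv.Perm

theorem ZMod.natCast_eq_of_neg_one_pow_eq {a b : ℕ} (h : (-1 : ℤˣ) ^ a = (-1) ^ b) :
    (a : ZMod 2) = b := by
  rw [ZMod.natCast_eq_natCast_iff']
  rw [Int.units_pow_eq_pow_mod_two, Int.units_pow_eq_pow_mod_two (-1) b] at h
  rcases Nat.mod_two_eq_zero_or_one a with ha | ha <;>
    rcases Nat.mod_two_eq_zero_or_one b with hb | hb <;> simp_all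

section Lifts

variable {n : ℕ}

theorem B.commute_mk_zero_iff {σ π : Perm (Fin n)} {v : Fin n → ZMod 2} :
    Commute (⟨0, σ⟩ : B n) ⟨v, π⟩ ↔ v ∘ σ.symm = v ∧ Commute σ π := by
  simp [Commute, SemiconjBy, B.ext_iff]

theorem epsG_pow (N : ℕ) : epsG n ^ N = ⟨⟨0, N⟩, 1⟩ := by
  induction N with
  | zero => rfl
  | succ N ih =>
    rw [pow_succ, ih]
    ext
    · simp [epsG, actH]
    · simp [epsG, actH, Rf]
    · simp [epsG]

theorem commutatorElement_eq_of_pG {σ π : Perm (Fin n)} {v : Fin n → ZMod 2} {mt lt : G n}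
    (hm : pG n mt = ⟨0, σ⟩) (hl : pG n lt = ⟨v, π⟩) (hv : v ∘ σ.symm = v)
    (hσπ : Commute σ π) : ⁅mt, lt⁆ = ⟨⟨0, Rf n σ v⟩, 1⟩ := by
  obtain ⟨⟨a, b⟩, s⟩ := mt
  obtain ⟨⟨a', c⟩, s'⟩ := lt
  simp only [pG, B.mk.injEq] at hm hl
  obtain ⟨ha, hs⟩ := hm
  obtain ⟨ha', hs'⟩ := hl
  subst a s a' s'
  have hswap : (⟨⟨0, b⟩, σ⟩ : G n) * ⟨⟨v, c⟩, π⟩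
      = ⟨⟨0, Rf n σ v⟩, 1⟩ * (⟨⟨v, c⟩, π⟩ * ⟨⟨0, b⟩, σ⟩) := by
    ext
    · simp only [G.mul_h, actH_one_perm]
      simp [actH, hv]
    · simp only [G.mul_h, actH_one_perm]
      simp [actH, Rf]
      ring
    · simp [hσπ.eq]
  rw [commutatorElement_def, hswap]
  group

end Lifts

section OrbitsOfCommutingPerms

variable {n : ℕ} {σ π : Perm (Fin n)}

theorem mem_orb {k j : Fin n} : j ∈ orb n σ k ↔ σ.SameCycle k j := by
  simp only [orb, mem_filter, mem_univ, true_and, Perm.SameCycle]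

theorem orb_eq_filter_sameCycle (σ : Perm (Fin n)) :
    orb n σ = fun k => ({j | σ.SameCycle k j} : Finset (Fin n)) := by
  ext k j
  rw [mem_orb, mem_filter, and_iff_right (mem_univ j)]

theorem orb_eq_of_sameCycle {k j : Fin n} (h : σ.SameCycle k j) : orb n σ j = orb n σ k := by
  ext i
  rw [mem_orb, mem_orb]
  exact ⟨h.trans, h.symm.trans⟩

theorem mem_orb2 {k j : Fin n} :
    j ∈ orb2 n σ π k ↔ ∃ a b : ℤ, (σ ^ a * π ^ b) k = j := by
  simp only [orb2, mem_filter, mem_univ, true_and]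

theorem orb_subset_orb2 (k : Fin n) : orb n σ k ⊆ orb2 n σ π k := fun j hj => by
  obtain ⟨a, rfl⟩ := mem_orb.mp hj
  exact mem_orb2.mpr ⟨a, 0, by simp⟩

theorem orb2_eq_of_mem (hc : Commute σ π) {k j : Fin n} (h : j ∈ orb2 n σ π k) :
    orb2 n σ π j = orb2 n σ π k := by
  obtain ⟨a, b, rfl⟩ := mem_orb2.mp h
  have hmul : ∀ c d : ℤ, σ ^ c * π ^ d * (σ ^ a * π ^ b) = σ ^ (c + a) * π ^ (d + b) := by
    intro c d
    rw [zpow_add, zpow_add, mul_assoc, ← mul_assoc (π ^ d), ((hc.zpow_zpow a d).symm).eq]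
    group
  ext i
  simp only [mem_orb2, ← Perm.mul_apply, hmul]
  constructor
  · rintro ⟨c, d, rfl⟩
    exact ⟨c + a, d + b, rfl⟩
  · rintro ⟨c, d, rfl⟩
    exact ⟨c - a, d - b, by simp⟩

theorem orb_apply_of_commute {g : Perm (Fin n)} (hc : Commute σ g) (k : Fin n) :
    orb n σ (g k) = (orb n σ k).map g.toEmbedding := by
  have hconj : g * σ * g⁻¹ = σ := by rw [← hc.eq, mul_inv_cancel_right]
  ext j
  rw [mem_map_equiv, mem_orb, mem_orb]
  conv_lhs => rw [← hconj, Perm.sameCycle_conj]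
  simp

theorem card_orb_eq_of_mem_orb2 (hc : Commute σ π) {k j : Fin n} (h : j ∈ orb2 n σ π k) :
    #(orb n σ j) = #(orb n σ k) := by
  obtain ⟨a, b, rfl⟩ := mem_orb2.mp h
  rw [Perm.mul_apply, orb_eq_of_sameCycle ⟨a, rfl⟩, orb_apply_of_commute (hc.zpow_right b),
    card_map]

theorem orb2_eq_of_mem_orbs2 (hc : Commute σ π) {I : Finset (Fin n)} (hI : I ∈ orbs2 n σ π)
    {j : Fin n} (hj : j ∈ I) : orb2 n σ π j = I := by
  obtain ⟨k, -, rfl⟩ := mem_image.mp hI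
  exact orb2_eq_of_mem hc hj

theorem sum_image_orb_eq_sum_orbs2 {M : Type*} [AddCommMonoid M] (hc : Commute σ π)
    (P : Fin n → Prop) [DecidablePred P] (g : Finset (Fin n) → M) :
    ∑ C ∈ (univ.filter P).image (orb n σ), g C
      = ∑ I ∈ orbs2 n σ π, ∑ C ∈ (I.filter P).image (orb n σ), g C := by
  rw [← sum_biUnion]
  · congr 1
    ext C
    simp only [mem_biUnion, mem_image, mem_filter, mem_univ, true_and]
    constructor
    · rintro ⟨j, hj, rfl⟩
      exact ⟨orb2 n σ π j, mem_image_of_mem _ (mem_univ j), j,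
        ⟨mem_orb2.mpr ⟨0, 0, rfl⟩, hj⟩, rfl⟩
    · rintro ⟨I, -, j, ⟨-, hj⟩, rfl⟩
      exact ⟨j, hj, rfl⟩
  · intro I hI I' hI' hne
    refine disjoint_left.mpr fun C hC hC' => hne ?_
    obtain ⟨j, hj, rfl⟩ := mem_image.mp hC
    obtain ⟨j', hj', hjj'⟩ := mem_image.mp hC'
    have hj'I : j' ∈ I := by
      rw [← orb2_eq_of_mem_orbs2 hc hI (mem_filter.mp hj).1]
      exact orb_subset_orb2 j (hjj' ▸ mem_orb.mpr (Perm.SameCycle.refl σ j'))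
    rw [← orb2_eq_of_mem_orbs2 hc hI hj'I, orb2_eq_of_mem_orbs2 hc hI' (mem_filter.mp hj').1]

end OrbitsOfCommutingPerms

section Parity

variable {n : ℕ}

theorem Rf_eq_card_inversions (σ : Perm (Fin n)) (v : Fin n → ZMod 2) :
    Rf n σ v = (#{q ∈ σ.inversions | v q.1 = 1 ∧ v q.2 = 1} : ZMod 2) := by
  have mul_eq_ite : ∀ a b : ZMod 2, a * b = if a = 1 ∧ b = 1 then 1 else 0 := by decide
  rw [← sum_boole]
  exact sum_congr rfl fun q _ => mul_eq_ite _ _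

theorem Rf_eq_sum_card_orb_sub_one {σ : Perm (Fin n)} {v : Fin n → ZMod 2}
    (hv : v ∘ σ.symm = v) :
    Rf n σ v
      = ((∑ C ∈ (univ.filter (v · = 1)).image (orb n σ), (#C - 1) : ℕ) : ZMod 2) := by
  have hp : ∀ x, v (σ x) = 1 ↔ v x = 1 := fun x => by
    rw [← congrFun hv (σ x), Function.comp_apply, Equiv.symm_apply_apply]
  rw [Rf_eq_card_inversions]
  refine (ZMod.natCast_eq_of_neg_one_pow_eq
    (Perm.neg_one_pow_card_inversions_filter (p := (v · = 1)) σ hp)).trans ?_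
  rw [orb_eq_filter_sameCycle]

end Parity

theorem phi_formula_full_general (n : ℕ) (σ : Equiv.Perm (Fin n))
    (v : Fin n → ZMod 2) (π : Equiv.Perm (Fin n))
    (hc : Commute ((⟨0, σ⟩ : B n)) ⟨v, π⟩)
    (rep : Finset (Fin n) → Fin n) (hrep : ∀ I ∈ orbs2 n σ π, rep I ∈ I)
    (mt lt : G n) (hm : pG n mt = ⟨0, σ⟩) (hl : pG n lt = ⟨v, π⟩) :
    (∀ I ∈ orbs2 n σ π, ∀ k ∈ I, (orb n σ k).card = (orb n σ (rep I)).card) ∧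
    ⁅mt, lt⁆ = epsG n ^
      (∑ I ∈ orbs2 n σ π,
        ((orb n σ (rep I)).card - 1) *
          ((I.filter (fun j => v j = 1)).image (fun j => orb n σ j)).card) := by
  obtain ⟨hv, hσπ⟩ := B.commute_mk_zero_iff.mp hc
  have hcard : ∀ I ∈ orbs2 n σ π, ∀ k ∈ I, #(orb n σ k) = #(orb n σ (rep I)) := by
    intro I hI k hk
    obtain ⟨k₀, -, rfl⟩ := mem_image.mp hI
    rw [card_orb_eq_of_mem_orb2 hσπ hk, card_orb_eq_of_mem_orb2 hσπ (hrep _ hI)]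
  have hregroup : ∑ C ∈ (univ.filter (v · = 1)).image (orb n σ), (#C - 1)
      = ∑ I ∈ orbs2 n σ π,
          (#(orb n σ (rep I)) - 1) * #((I.filter (v · = 1)).image (orb n σ)) := by
    rw [sum_image_orb_eq_sum_orbs2 hσπ]
    refine sum_congr rfl fun I hI => ?_
    rw [sum_const_nat fun C hC => ?_, mul_comm]
    obtain ⟨j, hj, rfl⟩ := mem_image.mp hC
    rw [hcard I hI j (mem_filter.mp hj).1]
  refine ⟨hcard, ?_⟩
  rw [commutatorElement_eq_of_pG hm hl hv hσπ, epsG_pow, Rf_eq_sum_card_orb_sub_one hv, hregroup]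

/-- Let `m = (0, σ)` and `ℓ = (v, π)` commute in `B n`. For each orbit `O` of `⟨π⟩` on
the set of `σ`-orbits (encoded by the union `I ∈ orbs2 n σ π` of its members), all
`σ`-orbits in `O` have the same cardinality `e_O = |orb σ (rep I)|`, and with
`d_O = #{C ∈ O : v ≡ 1 on C}` one has `φ(m, ℓ) = ε̂^N`, `N = Σ_O (e_O − 1)·d_O`. -/
theorem phi_formula_full (n : ℕ) (hn : 0 < n) (σ : Equiv.Perm (Fin n))
    (v : Fin n → ZMod 2) (π : Equiv.Perm (Fin n))
    (hc : Commute ((⟨0, σ⟩ : B n)) ⟨v, π⟩)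
    (rep : Finset (Fin n) → Fin n) (hrep : ∀ I ∈ orbs2 n σ π, rep I ∈ I)
    (mt lt : G n) (hm : pG n mt = ⟨0, σ⟩) (hl : pG n lt = ⟨v, π⟩) :
    (∀ I ∈ orbs2 n σ π, ∀ k ∈ I, (orb n σ k).card = (orb n σ (rep I)).card) ∧
    ⁅mt, lt⁆ = epsG n ^
      (∑ I ∈ orbs2 n σ π,
        ((orb n σ (rep I)).card - 1) *
          ((I.filter (fun j => v j = 1)).image (fun j => orb n σ j)).card) :=
  phi_formula_full_general n σ v π hc rep hrep mt lt hm hl
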